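/- arXiv:1904.07090 — 3 statements merged into one kernel-verified Lean document; each statement's English description precedes it below -/
import Mathlib

section
/- Let a, b, p > 0 with p ≤ a and p ≤ b, and suppose s = 1/(N p) for some N ≥ 1 with a/(Np) ≤ 1 and b/(Np) ≤ 1. Then if a ≠ b: (p/(a-b))·(e^{-s b} - e^{-s a}) ≥ (1/N) e^{-1}; and if a = b: s·p·e^{-s a} ≥ (1/N) e^{-1}. (This is the one-jump probability lower bound p_{s_i}^i(x̂^{i-1}) ≥ 1/(N e) used in Lemma 3.3, with p = φ(x̂^{i-1}_i), a = φ̄(x̂^{i-1}), b = φ̄(Δ_i(x̂^{i-1})).) -/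
open Real

lemma exp_diff_lower (s x y : ℝ) (hxy : y < x) :
    s * (x - y) * exp (-s * x) ≤ exp (-s * y) - exp (-s * x) := by
  have h := Real.add_one_le_exp (s * (x - y))
  have hrw : -s * y = -s * x + s * (x - y) := by ring
  rw [hrw, Real.exp_add]
  have hpos := Real.exp_pos (-s * x)
  nlinarith

/-- Lower bound `1/(Ne)` for one-jump probabilities at time `s = 1/(Np)`. -/
theorem one_jump_probability_lower_bound (a b p : ℝ) (N : ℕ) (hN : 1 ≤ N)
    (hp : 0 < p) (ha : 0 < a) (hb : 0 < b)
    (hpa : p ≤ a) (hpb : p ≤ b)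
    (s : ℝ) (hs : s = 1 / (N * p))
    (h1 : a / (N * p) ≤ 1) (h2 : b / (N * p) ≤ 1) :
    (a ≠ b → (1 / N : ℝ) * exp (-1) ≤ p / (a - b) * (exp (-s * b) - exp (-s * a))) ∧
    (a = b → (1 / N : ℝ) * exp (-1) ≤ s * p * exp (-s * a)) := by
  have hNR : (0:ℝ) < (N:ℝ) := by exact_mod_cast Nat.pos_of_ne_zero (by omega)
  have hNp : (0:ℝ) < (N:ℝ) * p := mul_pos hNR hp
  have hspos : 0 < s := by rw [hs]; positivity
  have hsp : s * p = 1 / N := by rw [hs]; field_simp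
  have hsa : s * a ≤ 1 := by
    rw [hs]; rw [div_le_one hNp] at h1; rw [div_mul_eq_mul_div, one_mul, div_le_one hNp]
    linarith
  have hsb : s * b ≤ 1 := by
    rw [hs]; rw [div_le_one hNp] at h2; rw [div_mul_eq_mul_div, one_mul, div_le_one hNp]
    linarith
  have hea : exp (-1) ≤ exp (-s * a) := Real.exp_le_exp.mpr (by linarith)
  have heb : exp (-1) ≤ exp (-s * b) := Real.exp_le_exp.mpr (by linarith)
  constructor
  · intro hne
    rcases lt_or_gt_of_ne hne with h | h
    · -- a < b
      have key := exp_diff_lower s b a h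
      have hba : 0 < b - a := by linarith
      have heq2 : p / (a - b) * (exp (-s * b) - exp (-s * a))
          = p / (b - a) * (exp (-s * a) - exp (-s * b)) := by
        rw [div_mul_eq_mul_div, div_mul_eq_mul_div]
        rw [div_eq_div_iff (by linarith) (by positivity)]
        ring
      rw [heq2]
      calc (1/N : ℝ) * exp (-1) ≤ (1/N : ℝ) * exp (-s*b) := by
            apply mul_le_mul_of_nonneg_left heb (by positivity)
        _ = p / (b-a) * (s * (b - a) * exp (-s * b)) := by
            rw [← hsp]; field_simp
        _ ≤ _ := mul_le_mul_of_nonneg_left key (by positivity)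
    · -- b < a
      have key := exp_diff_lower s a b h
      have hab : 0 < a - b := by linarith
      calc (1/N : ℝ) * exp (-1) ≤ (1/N : ℝ) * exp (-s*a) := by
            apply mul_le_mul_of_nonneg_left hea (by positivity)
        _ = p / (a-b) * (s * (a - b) * exp (-s * a)) := by
            rw [← hsp]; field_simp
        _ ≤ _ := mul_le_mul_of_nonneg_left key (by positivity)
  · intro heq
    rw [hsp]
    exact mul_le_mul_of_nonneg_left hea (by positivity)
end

section
/- Let μ be a probability measure on a finite set D and suppose for each pair x, y ∈ D there is a path x = x̃⁰, x̃¹, …, x̃^{|J_{xy}|} = y within D where each step is a jump x̃^{k+1} = Δ_{j_k}(x̃^k), with path lengths uniformly bounded by N. If φ ≥ δ > 0, then for any f with μ(f 1_D) = 0: μ(f² 1_D) ≤ (N²/(2 δ min_{x∈D} μ(x))) · μ(Γ(f,f) 1_D), where Γ(f,f)(x) = (1/2) Σ_i φ(x^i)(f(Δ_i(x)) − f(x))². -/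
/-!
A jump changes `f` by at most `√(2 E / (δ m))`, where `E = μ(Γ(f,f) 1_D)` and `m = min_D μ`,
because `Γ(f,f)(x)` contains the term `φ/2 · (f(Δ_i x) - f x)²` and `μ(x) ≥ m`. Along a path of at
most `N` jumps inside `D` this gives `(f x - f y)² ≤ 2 N² E / (δ m)` for all `x, y ∈ D`, and the
variance of a function whose range has diameter `R` is at most `R² / 4` (Popoviciu).
-/

open Finset

theorem Finset.sum_mul_sq_le_of_sq_sub_le {ι : Type*} (s : Finset ι) (w f : ι → ℝ)
    (hw : ∀ i ∈ s, 0 ≤ w i) (hw1 : ∑ i ∈ s, w i = 1) (hf : ∑ i ∈ s, w i * f i = 0) (B : ℝ)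
    (hB : ∀ i ∈ s, ∀ j ∈ s, (f i - f j) ^ 2 ≤ B) :
    ∑ i ∈ s, w i * f i ^ 2 ≤ B / 4 := by
  have hs : s.Nonempty := nonempty_of_sum_ne_zero (by rw [hw1]; exact one_ne_zero)
  obtain ⟨iMax, hiMax, hMax⟩ := exists_mem_eq_sup' hs f
  obtain ⟨iMin, hiMin, hMin⟩ := exists_mem_eq_inf' hs f
  set c := (f iMax + f iMin) / 2 with hc
  have hshift : ∑ i ∈ s, w i * (f i - c) ^ 2 = ∑ i ∈ s, w i * f i ^ 2 + c ^ 2 := by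
    have hexpand : ∀ i, w i * (f i - c) ^ 2 = w i * f i ^ 2 - 2 * c * (w i * f i) + c ^ 2 * w i :=
      fun i => by ring
    simp only [hexpand, sum_add_distrib, sum_sub_distrib, ← mul_sum, hw1, hf]
    ring
  have hpoint : ∀ i ∈ s, (f i - c) ^ 2 ≤ B / 4 := by
    intro i hi
    have hle : f i ≤ f iMax := hMax ▸ le_sup' f hi
    have hge : f iMin ≤ f i := hMin ▸ inf'_le f hi
    -- `(f i - c)² - ((f iMax - f iMin) / 2)² = (f i - f iMax) (f i - f iMin) ≤ 0`
    rw [hc]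
    nlinarith [hB iMax hiMax iMin hiMin, mul_nonneg (sub_nonneg.2 hle) (sub_nonneg.2 hge)]
  calc ∑ i ∈ s, w i * f i ^ 2 ≤ ∑ i ∈ s, w i * (f i - c) ^ 2 := by
        rw [hshift]; linarith [sq_nonneg c]
    _ ≤ ∑ i ∈ s, w i * (B / 4) :=
        sum_le_sum fun i hi => mul_le_mul_of_nonneg_left (hpoint i hi) (hw i hi)
    _ = B / 4 := by rw [← sum_mul, hw1, one_mul]

theorem sq_sub_le_sq_mul_of_forall_sq_sub_succ_le (u : ℕ → ℝ) (k : ℕ) (b : ℝ)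
    (hu : ∀ l < k, (u (l + 1) - u l) ^ 2 ≤ b) : (u k - u 0) ^ 2 ≤ (k : ℝ) ^ 2 * b := by
  calc (u k - u 0) ^ 2 = (∑ l ∈ range k, (u (l + 1) - u l)) ^ 2 := by rw [sum_range_sub]
    _ ≤ k * ∑ l ∈ range k, (u (l + 1) - u l) ^ 2 := by
        simpa using sq_sum_le_card_mul_sum_sq (s := range k) (f := fun l => u (l + 1) - u l)
    _ ≤ k * ∑ _l ∈ range k, b := by
        gcongr with l hl; exact hu l (mem_range.1 hl)
    _ = (k : ℝ) ^ 2 * b := by rw [sum_const, card_range, nsmul_eq_mul]; ring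

section CarreDuChamp

variable {ι α : Type*} [Fintype ι]

noncomputable def carreDuChamp (φ : α → ℝ) (Δ : ι → (ι → α) → (ι → α)) (f : (ι → α) → ℝ)
    (x : ι → α) : ℝ :=
  (1 / 2) * ∑ i, φ (x i) * (f (Δ i x) - f x) ^ 2

variable {φ : α → ℝ} {δ : ℝ} (Δ : ι → (ι → α) → (ι → α)) (f : (ι → α) → ℝ)

theorem carreDuChamp_nonneg (hφ : ∀ a, 0 ≤ φ a) (x : ι → α) : 0 ≤ carreDuChamp φ Δ f x :=
  mul_nonneg (by norm_num) (sum_nonneg fun _ _ => mul_nonneg (hφ _) (sq_nonneg _))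

theorem mul_sq_sub_le_carreDuChamp (hδ : 0 ≤ δ) (hφ : ∀ a, δ ≤ φ a) (x : ι → α) (i : ι) :
    δ / 2 * (f (Δ i x) - f x) ^ 2 ≤ carreDuChamp φ Δ f x := by
  have hterm : φ (x i) * (f (Δ i x) - f x) ^ 2 ≤ ∑ i, φ (x i) * (f (Δ i x) - f x) ^ 2 :=
    single_le_sum (f := fun i => φ (x i) * (f (Δ i x) - f x) ^ 2)
      (fun j _ => mul_nonneg (hδ.trans (hφ _)) (sq_nonneg _)) (mem_univ i)
  unfold carreDuChamp
  nlinarith [mul_le_mul_of_nonneg_right (hφ (x i)) (sq_nonneg (f (Δ i x) - f x))]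

theorem sq_jump_le_of_mem (hδ : 0 < δ) (hφ : ∀ a, δ ≤ φ a) (D : Finset (ι → α)) (hD : D.Nonempty)
    (μ : (ι → α) → ℝ) (hμpos : ∀ x ∈ D, 0 < μ x) {x : ι → α} (hx : x ∈ D) (i : ι) :
    (f (Δ i x) - f x) ^ 2
      ≤ 2 * (∑ z ∈ D, μ z * carreDuChamp φ Δ f z) / (δ * D.inf' hD μ) := by
  have hΓ : ∀ z, 0 ≤ carreDuChamp φ Δ f z := carreDuChamp_nonneg Δ f fun a => hδ.le.trans (hφ a)
  have hm : 0 < D.inf' hD μ := (lt_inf'_iff hD).2 hμpos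
  rw [le_div_iff₀ (mul_pos hδ hm)]
  calc (f (Δ i x) - f x) ^ 2 * (δ * D.inf' hD μ)
        = 2 * (D.inf' hD μ * (δ / 2 * (f (Δ i x) - f x) ^ 2)) := by ring
    _ ≤ 2 * (μ x * carreDuChamp φ Δ f x) := by
        gcongr
        exacts [(hμpos x hx).le, inf'_le μ hx, mul_sq_sub_le_carreDuChamp Δ f hδ.le hφ x i]
    _ ≤ 2 * ∑ z ∈ D, μ z * carreDuChamp φ Δ f z := by
        gcongr
        exact single_le_sum (fun z hz => mul_nonneg (hμpos z hz).le (hΓ z)) hx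

end CarreDuChamp

open Real Finset

theorem local_poincare_on_finite_set_general (N : ℕ) (φ : ℝ → ℝ)
    (δ : ℝ) (hδ : 0 < δ) (hφ : ∀ x : ℝ, δ ≤ φ x)
    (Δ : Fin N → (Fin N → ℝ) → (Fin N → ℝ))
    (D : Finset (Fin N → ℝ)) (hD : D.Nonempty)
    (μ : (Fin N → ℝ) → ℝ)
    (hμpos : ∀ x ∈ D, 0 < μ x) (hμ1 : ∑ x ∈ D, μ x = 1)
    (hpath : ∀ x ∈ D, ∀ y ∈ D, ∃ (k : ℕ) (p : ℕ → (Fin N → ℝ)) (j : ℕ → Fin N),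
      k ≤ N ∧ p 0 = x ∧ p k = y ∧ (∀ l < k, p (l + 1) = Δ (j l) (p l)) ∧
        (∀ l ≤ k, p l ∈ D))
    (f : (Fin N → ℝ) → ℝ) (hf : ∑ x ∈ D, μ x * f x = 0) :
    ∑ x ∈ D, μ x * (f x) ^ 2
      ≤ ((N : ℝ) ^ 2 / (2 * δ * D.inf' hD μ))
        * ∑ x ∈ D, μ x * ((1 / 2) * ∑ i, φ (x i) * (f (Δ i x) - f x) ^ 2) := by
  change _ ≤ _ * ∑ x ∈ D, μ x * carreDuChamp φ Δ f x
  set E := ∑ z ∈ D, μ z * carreDuChamp φ Δ f z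
  have hm : 0 < D.inf' hD μ := (lt_inf'_iff hD).2 hμpos
  have hE : 0 ≤ E := sum_nonneg fun z hz =>
    mul_nonneg (hμpos z hz).le (carreDuChamp_nonneg Δ f (fun a => hδ.le.trans (hφ a)) z)
  set b := 2 * E / (δ * D.inf' hD μ) with hb_def
  have hb : 0 ≤ b := by positivity
  have hpair : ∀ y ∈ D, ∀ x ∈ D, (f y - f x) ^ 2 ≤ (N : ℝ) ^ 2 * b := by
    intro y hy x hx
    obtain ⟨k, p, j, hkN, rfl, rfl, hstep, hmem⟩ := hpath x hx y hy
    calc (f (p k) - f (p 0)) ^ 2 ≤ (k : ℝ) ^ 2 * b :=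
          sq_sub_le_sq_mul_of_forall_sq_sub_succ_le (f ∘ p) k b fun l hl => by
            simpa [hstep l hl] using sq_jump_le_of_mem Δ f hδ hφ D hD μ hμpos (hmem l hl.le) (j l)
      _ ≤ (N : ℝ) ^ 2 * b := by gcongr
  calc ∑ x ∈ D, μ x * f x ^ 2 ≤ (N : ℝ) ^ 2 * b / 4 :=
        D.sum_mul_sq_le_of_sq_sub_le μ f (fun x hx => (hμpos x hx).le) hμ1 hf _ hpair
    _ = _ := by rw [hb_def]; field_simp; ring

/-- Local Poincaré inequality on the finite set `D` via jump-paths. -/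
theorem local_poincare_on_finite_set (N : ℕ) (hN : 0 < N) (φ : ℝ → ℝ)
    (δ : ℝ) (hδ : 0 < δ) (hφ : ∀ x : ℝ, δ ≤ φ x)
    (W : Fin N → Fin N → ℝ)
    (Δ : Fin N → (Fin N → ℝ) → (Fin N → ℝ))
    (hΔ : ∀ i x j, Δ i x j = if j = i then 0 else x j + W i j)
    (D : Finset (Fin N → ℝ)) (hD : D.Nonempty)
    (μ : (Fin N → ℝ) → ℝ)
    (hμpos : ∀ x ∈ D, 0 < μ x) (hμ1 : ∑ x ∈ D, μ x = 1)
    (hpath : ∀ x ∈ D, ∀ y ∈ D, ∃ (k : ℕ) (p : ℕ → (Fin N → ℝ)) (j : ℕ → Fin N),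
      k ≤ N ∧ p 0 = x ∧ p k = y ∧ (∀ l < k, p (l + 1) = Δ (j l) (p l)) ∧
        (∀ l ≤ k, p l ∈ D))
    (f : (Fin N → ℝ) → ℝ) (hf : ∑ x ∈ D, μ x * f x = 0) :
    ∑ x ∈ D, μ x * (f x) ^ 2
      ≤ ((N : ℝ) ^ 2 / (2 * δ * D.inf' hD μ))
        * ∑ x ∈ D, μ x * ((1 / 2) * ∑ i, φ (x i) * (f (Δ i x) - f x) ^ 2) :=
  local_poincare_on_finite_set_general N φ δ hδ hφ Δ D hD μ hμpos hμ1 hpath f hf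
end

section
/- Let λ, C > 0 with λ² C < 1. Suppose a nonnegative bounded function h satisfies μ(e^{λ' h}) ≤ (1/(1 − λ'² C)) (μ(e^{λ' h/2}))² for all 0 < λ' ≤ λ. Then μ(e^{λ h}) ≤ λ₀ e^{λ μ(h)}, where λ₀ = Π_{k=0}^∞ (1/(1 − λ² C/4^k))^{2^k} < ∞. (Iteration: μ(e^{λh}) ≤ Π_{k=0}^{n-1}(1/(1−λ²C/4^k))^{2^k} (μ(e^{(λ/2^n) h}))^{2^n}, and (μ(e^{(λ/2^n)h}))^{2^n} → e^{λ μ(h)}.) -/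
open Real MeasureTheory Filter Topology

lemma hasProd_rexp {g : ℕ → ℝ} {s : ℝ} (hg : HasSum g s) :
    HasProd (fun k => Real.exp (g k)) (Real.exp s) := by
  have := (Real.continuous_exp.continuousAt (x := s)).tendsto.comp hg
  simpa [HasProd, Function.comp_def, Real.exp_sum] using this

/-- Iterating the self-improving exponential moment bound gives
`μ(e^{λh}) ≤ λ₀ e^{λ μ(h)}` with `λ₀ = Π_k (1/(1 − λ²C/4^k))^{2^k}`. -/
theorem exp_moment_iteration {S : Type*} [MeasurableSpace S]
    (μ : Measure S) [IsProbabilityMeasure μ]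
    (h : S → ℝ) (hmeas : Measurable h) (h0 : ∀ x, 0 ≤ h x)
    (hbd : ∃ M, ∀ x, h x ≤ M)
    (lam C : ℝ) (hlam : 0 < lam) (hC : 0 < C) (hlc : lam ^ 2 * C < 1)
    (hiter : ∀ l : ℝ, 0 < l → l ≤ lam →
      (∫ x, exp (l * h x) ∂μ)
        ≤ (1 / (1 - l ^ 2 * C)) * (∫ x, exp (l * h x / 2) ∂μ) ^ 2) :
    (∫ x, exp (lam * h x) ∂μ)
      ≤ (∏' k : ℕ, (1 / (1 - lam ^ 2 * C / 4 ^ k)) ^ (2 ^ k))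
        * exp (lam * ∫ x, h x ∂μ) := by
  obtain ⟨M₀, hM₀⟩ := hbd
  set M : ℝ := max M₀ 0 with hMdef
  have hMnn : 0 ≤ M := le_max_right _ _
  have hhM : ∀ x, h x ≤ M := fun x => (hM₀ x).trans (le_max_left _ _)
  have hone : (0:ℝ) < 1 - lam ^ 2 * C := by linarith
  have hfac : ∀ k : ℕ, 0 < 1 - lam ^ 2 * C / 4 ^ k := by
    intro k
    have h4 : (1:ℝ) ≤ 4 ^ k := one_le_pow₀ (by norm_num)
    have : lam ^ 2 * C / 4 ^ k ≤ lam ^ 2 * C := div_le_self (by positivity) h4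
    linarith
  have hfac1 : ∀ k : ℕ, (1:ℝ) ≤ (1 / (1 - lam ^ 2 * C / 4 ^ k)) ^ (2 ^ k) := by
    intro k
    apply one_le_pow₀
    rw [le_div_iff₀ (hfac k)]
    have : 0 < lam ^ 2 * C / 4 ^ k := by positivity
    linarith
  -- integrability
  have hint : ∀ l : ℝ, 0 ≤ l → Integrable (fun x => exp (l * h x)) μ := by
    intro l hl
    refine Integrable.mono' (integrable_const (exp (l * M)))
      ((measurable_exp.comp (hmeas.const_mul l)).aestronglyMeasurable) ?_
    filter_upwards with x
    rw [Real.norm_eq_abs, abs_of_nonneg (exp_nonneg _)]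
    exact exp_le_exp.2 (mul_le_mul_of_nonneg_left (hhM x) hl)
  have hinth : Integrable h μ := by
    refine Integrable.mono' (integrable_const M) hmeas.aestronglyMeasurable ?_
    filter_upwards with x
    rw [Real.norm_eq_abs, abs_of_nonneg (h0 x)]
    exact hhM x
  have hinth2 : Integrable (fun x => h x ^ 2) μ := by
    refine Integrable.mono' (integrable_const (M ^ 2)) ((hmeas.pow_const 2).aestronglyMeasurable) ?_
    filter_upwards with x
    rw [Real.norm_eq_abs, abs_of_nonneg (by positivity)]
    exact pow_le_pow_left₀ (h0 x) (hhM x) 2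
  have hIpos : ∀ l : ℝ, 0 ≤ l → (0:ℝ) < ∫ x, exp (l * h x) ∂μ := by
    intro l hl
    have h1 : (1:ℝ) ≤ ∫ x, exp (l * h x) ∂μ := by
      have : (1:ℝ) = ∫ _x, (1:ℝ) ∂μ := by simp
      rw [this]
      refine integral_mono (integrable_const 1) (hint l hl) fun x => ?_
      rw [← Real.exp_zero]
      exact exp_le_exp.2 (mul_nonneg hl (h0 x))
    linarith
  -- iteration
  have key : ∀ n : ℕ, (∫ x, exp (lam * h x) ∂μ) ≤
      (∏ k ∈ Finset.range n, (1 / (1 - lam ^ 2 * C / 4 ^ k)) ^ (2 ^ k)) *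
      (∫ x, exp (lam / 2 ^ n * h x) ∂μ) ^ (2 ^ n) := by
    intro n
    induction n with
    | zero => simp
    | succ n ih =>
      have hl : 0 < lam / 2 ^ n := by positivity
      have hle : lam / 2 ^ n ≤ lam := div_le_self hlam.le (one_le_pow₀ (by norm_num))
      have step := hiter (lam / 2 ^ n) hl hle
      have heq : (fun x => exp (lam / 2 ^ n * h x / 2)) = fun x => exp (lam / 2 ^ (n+1) * h x) := by
        funext x; ring_nf
      rw [heq] at step
      have hc : (lam / 2 ^ n) ^ 2 * C = lam ^ 2 * C / 4 ^ n := by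
        have h4 : ((2:ℝ) ^ n) ^ 2 = 4 ^ n := by
          rw [← pow_mul, mul_comm, pow_mul]; norm_num
        rw [div_pow, h4]; ring
      rw [hc] at step
      calc (∫ x, exp (lam * h x) ∂μ)
          ≤ (∏ k ∈ Finset.range n, (1 / (1 - lam ^ 2 * C / 4 ^ k)) ^ (2 ^ k)) *
            (∫ x, exp (lam / 2 ^ n * h x) ∂μ) ^ (2 ^ n) := ih
        _ ≤ (∏ k ∈ Finset.range n, (1 / (1 - lam ^ 2 * C / 4 ^ k)) ^ (2 ^ k)) *
            ((1 / (1 - lam ^ 2 * C / 4 ^ n)) * (∫ x, exp (lam / 2 ^ (n+1) * h x) ∂μ) ^ 2) ^ (2 ^ n) := by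
            apply mul_le_mul_of_nonneg_left _
              (Finset.prod_nonneg fun k _ => zero_le_one.trans (hfac1 k))
            exact pow_le_pow_left₀ (hIpos _ hl.le).le step _
        _ = (∏ k ∈ Finset.range (n+1), (1 / (1 - lam ^ 2 * C / 4 ^ k)) ^ (2 ^ k)) *
            (∫ x, exp (lam / 2 ^ (n+1) * h x) ∂μ) ^ (2 ^ (n+1)) := by
            have he : 2 * 2 ^ n = 2 ^ (n+1) := by rw [pow_succ]; ring
            rw [Finset.prod_range_succ, mul_pow, ← pow_mul, he]
            ring
  -- multipliability via logs
  have hgnn : ∀ k : ℕ, 0 ≤ (2:ℝ) ^ k * Real.log (1 / (1 - lam ^ 2 * C / 4 ^ k)) := by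
    intro k
    refine mul_nonneg (by positivity) (Real.log_nonneg ?_)
    rw [le_div_iff₀ (hfac k)]
    have : 0 < lam ^ 2 * C / 4 ^ k := by positivity
    linarith
  have hsum : Summable (fun k : ℕ => (2:ℝ) ^ k * Real.log (1 / (1 - lam ^ 2 * C / 4 ^ k))) := by
    have hgeo : Summable (fun k : ℕ => lam ^ 2 * C / (1 - lam ^ 2 * C) * ((1:ℝ)/2) ^ k) :=
      (summable_geometric_of_lt_one (by norm_num) (by norm_num)).mul_left _
    refine Summable.of_nonneg_of_le hgnn (fun k => ?_) hgeo
    have hxk := hfac k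
    have hx : 0 < lam ^ 2 * C / 4 ^ k := by positivity
    have hxle : lam ^ 2 * C / 4 ^ k ≤ lam ^ 2 * C :=
      div_le_self (by positivity) (one_le_pow₀ (by norm_num))
    have hlog : Real.log (1 / (1 - lam ^ 2 * C / 4 ^ k)) ≤
        (lam ^ 2 * C / 4 ^ k) / (1 - lam ^ 2 * C) := by
      have h1 := Real.log_le_sub_one_of_pos (one_div_pos.2 hxk)
      have e1 : 1 / (1 - lam ^ 2 * C / 4 ^ k) - 1
          = (lam ^ 2 * C / 4 ^ k) / (1 - lam ^ 2 * C / 4 ^ k) := by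
        generalize lam ^ 2 * C / 4 ^ k = x at hxk ⊢
        field_simp
        ring
      have e2 : (lam ^ 2 * C / 4 ^ k) / (1 - lam ^ 2 * C / 4 ^ k)
          ≤ (lam ^ 2 * C / 4 ^ k) / (1 - lam ^ 2 * C) :=
        div_le_div_of_nonneg_left hx.le hone (by linarith)
      linarith
    have h4 : (4:ℝ) ^ k = 2 ^ k * 2 ^ k := by
      rw [show (4:ℝ) = 2 * 2 by norm_num, mul_pow]
    calc (2:ℝ) ^ k * Real.log (1 / (1 - lam ^ 2 * C / 4 ^ k))
        ≤ (2:ℝ) ^ k * ((lam ^ 2 * C / 4 ^ k) / (1 - lam ^ 2 * C)) :=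
          mul_le_mul_of_nonneg_left hlog (by positivity)
      _ = lam ^ 2 * C / (1 - lam ^ 2 * C) * ((1:ℝ)/2) ^ k := by
          rw [div_pow, one_pow, h4]
          field_simp
  have heq : (fun k : ℕ => Real.exp ((2:ℝ) ^ k * Real.log (1 / (1 - lam ^ 2 * C / 4 ^ k))))
      = fun k : ℕ => (1 / (1 - lam ^ 2 * C / 4 ^ k)) ^ (2 ^ k) := by
    funext k
    rw [show ((2:ℝ) ^ k) = ((2 ^ k : ℕ) : ℝ) by push_cast; ring, Real.exp_nat_mul,
      Real.exp_log (one_div_pos.2 (hfac k))]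
  have hp : HasProd (fun k : ℕ => (1 / (1 - lam ^ 2 * C / 4 ^ k)) ^ (2 ^ k))
      (Real.exp (∑' k, (2:ℝ) ^ k * Real.log (1 / (1 - lam ^ 2 * C / 4 ^ k)))) := by
    rw [← heq]; exact hasProd_rexp hsum.hasSum
  set T := ∏' k : ℕ, (1 / (1 - lam ^ 2 * C / 4 ^ k)) ^ (2 ^ k) with hT
  set I := ∫ x, h x ∂μ with hI
  have hTeq : T = Real.exp (∑' k, (2:ℝ) ^ k * Real.log (1 / (1 - lam ^ 2 * C / 4 ^ k))) :=
    hp.tprod_eq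
  have hT1 : (1:ℝ) ≤ T := by
    rw [hTeq]
    exact Real.one_le_exp (tsum_nonneg hgnn)
  have hPn : ∀ n : ℕ, (∏ k ∈ Finset.range n, (1 / (1 - lam ^ 2 * C / 4 ^ k)) ^ (2 ^ k)) ≤ T := by
    intro n
    have hprod : ∏ k ∈ Finset.range n, (1 / (1 - lam ^ 2 * C / 4 ^ k)) ^ (2 ^ k)
        = Real.exp (∑ k ∈ Finset.range n, (2:ℝ) ^ k * Real.log (1 / (1 - lam ^ 2 * C / 4 ^ k))) := by
      rw [Real.exp_sum]
      exact Finset.prod_congr rfl fun k _ => (congrFun heq k).symm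
    rw [hprod, hTeq]
    exact exp_le_exp.2 (Summable.sum_le_tsum _ (fun k _ => hgnn k) hsum)
  -- eventual bound
  have hbound : ∀ᶠ n : ℕ in atTop, (∫ x, exp (lam * h x) ∂μ)
      ≤ T * exp (lam * I + 2 * lam ^ 2 * M ^ 2 / 2 ^ n) := by
    have hev : ∀ᶠ n : ℕ in atTop, lam * M ≤ 2 ^ n :=
      (tendsto_pow_atTop_atTop_of_one_lt (by norm_num : (1:ℝ) < 2)).eventually_ge_atTop (lam * M)
    filter_upwards [hev] with n hn
    set t := lam / 2 ^ n with ht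
    have ht0 : 0 < t := by positivity
    have h2n : (0:ℝ) < 2 ^ n := by positivity
    have htM : ∀ x, |t * h x| ≤ 1 := by
      intro x
      rw [abs_of_nonneg (mul_nonneg ht0.le (h0 x))]
      calc t * h x ≤ t * M := mul_le_mul_of_nonneg_left (hhM x) ht0.le
        _ = lam * M / 2 ^ n := by rw [ht]; ring
        _ ≤ 1 := by rw [div_le_one h2n]; exact hn
    have hpt : ∀ x, exp (t * h x) ≤ 1 + t * h x + 2 * t ^ 2 * h x ^ 2 := by
      intro x
      have hb := Real.exp_bound (htM x) (n := 2) (by norm_num)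
      norm_num [Finset.sum_range_succ, Nat.factorial] at hb
      rw [← abs_mul] at hb
      have h1 := (abs_sub_le_iff.1 hb).1
      nlinarith [sq_abs (t * h x), sq_nonneg (t * h x)]
    have i1 : Integrable (fun x => 1 + t * h x) μ := (integrable_const 1).add (hinth.const_mul t)
    have i2 : Integrable (fun x => 2 * t ^ 2 * h x ^ 2) μ := hinth2.const_mul _
    have hIle : (∫ x, exp (t * h x) ∂μ) ≤ 1 + t * I + 2 * t ^ 2 * (∫ x, h x ^ 2 ∂μ) := by
      have hmono : (∫ x, exp (t * h x) ∂μ) ≤ ∫ x, (1 + t * h x) + 2 * t ^ 2 * h x ^ 2 ∂μ :=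
        integral_mono (hint t ht0.le) (i1.add i2) fun x => by
          have := hpt x; linarith
      rw [integral_add i1 i2, integral_add (integrable_const 1) (hinth.const_mul t),
        integral_const, integral_const_mul, integral_const_mul] at hmono
      simpa using hmono
    have hh2 : (∫ x, h x ^ 2 ∂μ) ≤ M ^ 2 := by
      calc (∫ x, h x ^ 2 ∂μ) ≤ ∫ _x, M ^ 2 ∂μ :=
            integral_mono hinth2 (integrable_const _) fun x =>
              pow_le_pow_left₀ (h0 x) (hhM x) 2
        _ = M ^ 2 := by simp
    have hIle2 : (∫ x, exp (t * h x) ∂μ) ≤ exp (t * I + 2 * t ^ 2 * M ^ 2) := by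
      have he := add_one_le_exp (t * I + 2 * t ^ 2 * M ^ 2)
      have h2t : 2 * t ^ 2 * (∫ x, h x ^ 2 ∂μ) ≤ 2 * t ^ 2 * M ^ 2 := by nlinarith
      linarith
    have hpow : (∫ x, exp (t * h x) ∂μ) ^ (2 ^ n) ≤ exp (lam * I + 2 * lam ^ 2 * M ^ 2 / 2 ^ n) := by
      calc (∫ x, exp (t * h x) ∂μ) ^ (2 ^ n)
          ≤ (exp (t * I + 2 * t ^ 2 * M ^ 2)) ^ (2 ^ n) :=
            pow_le_pow_left₀ (hIpos t ht0.le).le hIle2 _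
        _ = exp ((2 ^ n : ℕ) * (t * I + 2 * t ^ 2 * M ^ 2)) := (Real.exp_nat_mul _ _).symm
        _ = exp (lam * I + 2 * lam ^ 2 * M ^ 2 / 2 ^ n) := by
            congr 1
            rw [ht]
            push_cast
            field_simp
    calc (∫ x, exp (lam * h x) ∂μ)
        ≤ (∏ k ∈ Finset.range n, (1 / (1 - lam ^ 2 * C / 4 ^ k)) ^ (2 ^ k)) *
          (∫ x, exp (t * h x) ∂μ) ^ (2 ^ n) := key n
      _ ≤ T * exp (lam * I + 2 * lam ^ 2 * M ^ 2 / 2 ^ n) :=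
          mul_le_mul (hPn n) hpow (pow_nonneg (hIpos t ht0.le).le _) (zero_le_one.trans hT1)
  -- pass to the limit
  have h1 : Tendsto (fun n : ℕ => 2 * lam ^ 2 * M ^ 2 / 2 ^ n) atTop (𝓝 0) := by
    have h0' : Tendsto (fun n : ℕ => ((1:ℝ)/2) ^ n) atTop (𝓝 0) :=
      tendsto_pow_atTop_nhds_zero_of_lt_one (by norm_num) (by norm_num)
    have heqf : (fun n : ℕ => 2 * lam ^ 2 * M ^ 2 * ((1:ℝ)/2) ^ n)
        = fun n : ℕ => 2 * lam ^ 2 * M ^ 2 / 2 ^ n := by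
      funext n; rw [div_pow, one_pow]; ring
    have := h0'.const_mul (2 * lam ^ 2 * M ^ 2)
    rw [heqf] at this
    simpa using this
  have h2 : Tendsto (fun n : ℕ => lam * I + 2 * lam ^ 2 * M ^ 2 / 2 ^ n) atTop (𝓝 (lam * I)) := by
    simpa using h1.const_add (lam * I)
  have htend : Tendsto (fun n : ℕ => T * exp (lam * I + 2 * lam ^ 2 * M ^ 2 / 2 ^ n)) atTop
      (𝓝 (T * exp (lam * I))) :=
    ((Real.continuous_exp.continuousAt.tendsto.comp h2).const_mul T)
  exact ge_of_tendsto htend hbound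
end
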